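/- Suppose u : ℝ → ℝ is continuous and satisfies u(-x) = u(x + T) for all x ∈ ℝ, for some T > 0. Then ∫₀ᵀ dt₁ ∫₀^{t₁} dt₂ sinh(u(t₁) - u(t₂)) = 0. -/

import Mathlib

/-!
Since `u (T - t) = u t`, the addition formula
`sinh (u t₁ - u t₂) = sinh (u t₁) cosh (u t₂) - cosh (u t₁) sinh (u t₂)` writes the integrand as
`f t₁ g t₂ - g t₁ f t₂` with `f = sinh ∘ u` and `g = cosh ∘ u` both invariant under `t ↦ T - t`.
For such `f` and `g` the reflection `t ↦ T - t` gives
`∫₀ᵀ g t ∫₀ᵗ f = (∫₀ᵀ g) (∫₀ᵀ f) / 2`, which is symmetric in `f` and `g`, so the two halves of the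
double integral cancel.
-/

open Real intervalIntegral

section Reflection

variable {f g : ℝ → ℝ} {T : ℝ}

theorem integral_zero_sub_eq_of_reflect (hf : Continuous f) (hrefl : ∀ t, f (T - t) = f t)
    (t : ℝ) : ∫ s in 0..T - t, f s = (∫ s in 0..T, f s) - ∫ s in 0..t, f s := by
  have hflip : ∫ s in 0..t, f s = ∫ s in T - t..T, f s := by
    simpa only [hrefl, sub_zero] using integral_comp_sub_left f T (a := 0) (b := t)
  rw [hflip, ← integral_interval_sub_left (hf.intervalIntegrable 0 T)
    (hf.intervalIntegrable 0 (T - t)), sub_sub_cancel]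

theorem intervalIntegrable_mul_primitive (hf : Continuous f) (hg : Continuous g) (a b : ℝ) :
    IntervalIntegrable (fun t => g t * ∫ s in 0..t, f s) MeasureTheory.volume a b :=
  (hg.mul (continuous_primitive (fun a b => hf.intervalIntegrable a b) 0)).intervalIntegrable a b

theorem integral_mul_primitive_of_reflect (hf : Continuous f) (hg : Continuous g)
    (hf_refl : ∀ t, f (T - t) = f t) (hg_refl : ∀ t, g (T - t) = g t) :
    ∫ t in 0..T, g t * ∫ s in 0..t, f s = (∫ t in 0..T, g t) * (∫ t in 0..T, f t) / 2 := by
  have hflip := integral_comp_sub_left (fun t => g t * ∫ s in 0..t, f s) T (a := 0) (b := T)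
  simp only [hg_refl, integral_zero_sub_eq_of_reflect hf hf_refl, mul_sub, sub_zero,
    sub_self] at hflip
  rw [integral_sub ((hg.intervalIntegrable 0 T).mul_const _)
    (intervalIntegrable_mul_primitive hf hg 0 T), integral_mul_const] at hflip
  linarith

theorem integral_integral_antisymm_eq_zero_of_reflect (hf : Continuous f) (hg : Continuous g)
    (hf_refl : ∀ t, f (T - t) = f t) (hg_refl : ∀ t, g (T - t) = g t) :
    ∫ t₁ in 0..T, ∫ t₂ in 0..t₁, (f t₁ * g t₂ - g t₁ * f t₂) = 0 := by
  have hinner : ∀ t₁, ∫ t₂ in 0..t₁, (f t₁ * g t₂ - g t₁ * f t₂)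
      = f t₁ * (∫ t₂ in 0..t₁, g t₂) - g t₁ * ∫ t₂ in 0..t₁, f t₂ := fun t₁ => by
    rw [integral_sub ((hg.intervalIntegrable _ _).const_mul _)
      ((hf.intervalIntegrable _ _).const_mul _), integral_const_mul, integral_const_mul]
  simp only [hinner]
  rw [integral_sub (intervalIntegrable_mul_primitive hg hf 0 T)
      (intervalIntegrable_mul_primitive hf hg 0 T),
    integral_mul_primitive_of_reflect hg hf hg_refl hf_refl,
    integral_mul_primitive_of_reflect hf hg hf_refl hg_refl, mul_comm, sub_self]

end Reflection

theorem second_order_magnus_vanishes_general (T : ℝ)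
    (u : ℝ → ℝ) (hu : Continuous u) (hsymm : ∀ x : ℝ, u (-x) = u (x + T)) :
    (∫ t₁ in (0:ℝ)..T, ∫ t₂ in (0:ℝ)..t₁, Real.sinh (u t₁ - u t₂)) = 0 := by
  have hrefl : ∀ t, u (T - t) = u t := fun t => by
    simpa only [neg_sub, sub_add_cancel] using hsymm (t - T)
  simp only [sinh_sub]
  exact integral_integral_antisymm_eq_zero_of_reflect (continuous_sinh.comp hu)
    (continuous_cosh.comp hu) (fun t => congrArg sinh (hrefl t)) (fun t => congrArg cosh (hrefl t))

/-- If `u` is continuous and satisfies `u(-x) = u(x + T)`, then the second-order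
Magnus integral `∫₀ᵀ ∫₀^{t₁} sinh(u t₁ - u t₂) dt₂ dt₁` vanishes. -/
theorem second_order_magnus_vanishes (T : ℝ) (hT : 0 < T)
    (u : ℝ → ℝ) (hu : Continuous u) (hsymm : ∀ x : ℝ, u (-x) = u (x + T)) :
    (∫ t₁ in (0:ℝ)..T, ∫ t₂ in (0:ℝ)..t₁, Real.sinh (u t₁ - u t₂)) = 0 :=
  second_order_magnus_vanishes_general T u hu hsymm
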